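/- Let A = ℂ[X₁, X₂, Y], B = ℂ[x, y], and let φ : A → B be the ℂ-algebra map with φ(X₁) = x, φ(X₂) = y², φ(Y) = xy (the cross-cap). Then the sequence A² → A² → B → 0 is exact, where the first map is given by the matrix Λ = [[−Y, X₁], [X₁X₂, −Y]] and the second map sends the standard basis vectors e₁, e₂ to 1 and y respectively. In other words, Λ is a presentation matrix of B as an A-module. -/
import Mathlib


open MvPolynomial

/-- The cross-cap morphism `ℂ[X₁,X₂,Y] → ℂ[x,y]`, `X₁ ↦ x`, `X₂ ↦ y²`, `Y ↦ xy`.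
Variables: in the source `0 ↦ X₁`, `1 ↦ X₂`, `2 ↦ Y`; in the target `0 ↦ x`, `1 ↦ y`. -/
noncomputable def crossCap : MvPolynomial (Fin 3) ℂ →ₐ[ℂ] MvPolynomial (Fin 2) ℂ :=
  MvPolynomial.aeval ![X 0, X 1 ^ 2, X 0 * X 1]

/-- The Mond–Pellikaan presentation matrix of the cross-cap,
`Λ = [[−Y, X₁], [X₁X₂, −Y]]`. -/
noncomputable def crossCapMatrix : Matrix (Fin 2) (Fin 2) (MvPolynomial (Fin 3) ℂ) :=
  !![-(X 2), X 0; X 0 * X 1, -(X 2)]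

namespace CrossCapAux

abbrev A := MvPolynomial (Fin 3) ℂ
abbrev B := MvPolynomial (Fin 2) ℂ

noncomputable def ι : B →ₐ[ℂ] A := rename Fin.castSucc

noncomputable def θ : B →ₐ[ℂ] B := aeval ![X 0, X 1 ^ 2]

lemma crossCap_X0 : crossCap (X 0) = X 0 := by simp [crossCap]
lemma crossCap_X1 : crossCap (X 1) = X 1 ^ 2 := by simp [crossCap]
lemma crossCap_X2 : crossCap (X 2) = X 0 * X 1 := by simp [crossCap]

lemma vecMul_eq (c : Fin 2 → A) : Matrix.vecMul c crossCapMatrix =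
    ![c 0 * (-(X 2)) + c 1 * (X 0 * X 1), c 0 * X 0 + c 1 * (-(X 2))] := by
  funext i
  fin_cases i <;>
    simp [crossCapMatrix, Matrix.vecMul, dotProduct, Fin.sum_univ_two]

lemma eval_aeval (v : Fin 2 → ℂ) (f : Fin 2 → B) (P : B) :
    eval v (aeval f P) = eval (fun i => eval v (f i)) P := by
  induction P using MvPolynomial.induction_on with
  | C a => simp only [aeval_C, algebraMap_eq, eval_C]
  | add p q hp hq => simp only [map_add, hp, hq]
  | mul_X p n hp => simp only [map_mul, aeval_X, eval_mul, hp, eval_X]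

lemma crossCap_rename (P : B) : crossCap (ι P) = θ P := by
  induction P using MvPolynomial.induction_on with
  | C a => simp only [ι, θ, rename_C, crossCap, aeval_C]
  | add p q hp hq => simp only [map_add, hp, hq]
  | mul_X p n hp =>
      simp only [ι, θ, map_mul, rename_X] at *
      rw [hp]
      simp only [crossCap, aeval_X]
      congr 1
      fin_cases n <;> rfl

lemma theta_inj (P : B) (h : θ P = 0) : P = 0 := by
  apply MvPolynomial.funext
  intro v
  obtain ⟨b, hb⟩ : ∃ b : ℂ, b ^ 2 = v 1 :=
    ⟨_, IsAlgClosed.exists_pow_nat_eq (v 1) (n := 2) (by norm_num) |>.choose_spec⟩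
  have h2 := congrArg (eval ![v 0, b]) h
  rw [θ, eval_aeval] at h2
  have hv : (fun i => eval ![v 0, b] (![(X 0 : B), X 1 ^ 2] i)) = v := by
    funext i
    fin_cases i <;> simp [hb]
  rw [hv] at h2
  simpa using h2

lemma even_odd_zero (P Q : B) (h : θ P + θ Q * X 1 = 0) : P = 0 ∧ Q = 0 := by
  have hkey : ∀ a b : ℂ,
      eval ![a, b ^ 2] P + eval ![a, b ^ 2] Q * b = 0 := by
    intro a b
    have h1 := congrArg (eval ![a, b]) h
    simp only [θ, map_add, map_mul, eval_aeval, eval_X, map_zero] at h1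
    have hv : (fun i => eval ![a, b] (![(X 0 : B), X 1 ^ 2] i)) = ![a, b ^ 2] := by
      funext i; fin_cases i <;> simp
    rw [hv] at h1
    simpa using h1
  have hθP : θ P = 0 := by
    apply MvPolynomial.funext
    intro v
    have hv : (fun i => eval v (![(X 0 : B), X 1 ^ 2] i)) = ![v 0, (v 1) ^ 2] := by
      funext i; fin_cases i <;> simp
    rw [θ, eval_aeval, hv, map_zero]
    have h1 := hkey (v 0) (v 1)
    have h2 := hkey (v 0) (-(v 1))
    rw [neg_pow_two] at h2
    linear_combination (h1 + h2) / 2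
  have hP : P = 0 := theta_inj P hθP
  rw [hθP, zero_add] at h
  have hQ : θ Q = 0 := by
    rcases mul_eq_zero.mp h with h' | h'
    · exact h'
    · exact absurd h' (X_ne_zero 1)
  exact ⟨hP, theta_inj Q hQ⟩

end CrossCapAux

namespace CrossCapAux

lemma ι_X0 : ι (X 0) = X 0 := by simp [ι]
lemma ι_X1 : ι (X 1) = X 1 := by simp [ι]

lemma rel_zero (c₀ c₁ : A) :
    crossCap (c₀ * (-(X 2)) + c₁ * (X 0 * X 1)) * 1 +
      crossCap (c₀ * X 0 + c₁ * (-(X 2))) * X 1 = 0 := by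
  simp only [map_add, map_mul, map_neg, crossCap_X0, crossCap_X1, crossCap_X2]
  ring

def Claim₁ (f : A) : Prop :=
  ∃ P Q : B, ∃ c₀ c₁ : A,
    f = ι P + (c₀ * (-(X 2)) + c₁ * (X 0 * X 1)) ∧
    (0 : A) = ι Q + (c₀ * X 0 + c₁ * (-(X 2)))

def Claim₂ (f : A) : Prop :=
  ∃ P Q : B, ∃ c₀ c₁ : A,
    (0 : A) = ι P + (c₀ * (-(X 2)) + c₁ * (X 0 * X 1)) ∧
    f = ι Q + (c₀ * X 0 + c₁ * (-(X 2)))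

lemma reduce (f : A) : Claim₁ f ∧ Claim₂ f := by
  induction f using MvPolynomial.induction_on with
  | C a =>
      constructor
      · exact ⟨C a, 0, 0, 0, by simp [ι], by simp [ι]⟩
      · exact ⟨0, C a, 0, 0, by simp [ι], by simp [ι]⟩
  | add p q hp hq =>
      obtain ⟨⟨P1, Q1, c0, c1, e1, e2⟩, ⟨P1', Q1', c0', c1', e1', e2'⟩⟩ := hp
      obtain ⟨⟨P2, Q2, d0, d1, f1, f2⟩, ⟨P2', Q2', d0', d1', f1', f2'⟩⟩ := hq
      constructor
      · exact ⟨P1 + P2, Q1 + Q2, c0 + d0, c1 + d1,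
          by rw [map_add]; linear_combination e1 + f1,
          by rw [map_add]; linear_combination e2 + f2⟩
      · exact ⟨P1' + P2', Q1' + Q2', c0' + d0', c1' + d1',
          by rw [map_add]; linear_combination e1' + f1',
          by rw [map_add]; linear_combination e2' + f2'⟩
  | mul_X p n hp =>
      obtain ⟨⟨P1, Q1, c0, c1, e1, e2⟩, ⟨P2, Q2, d0, d1, f1, f2⟩⟩ := hp
      fin_cases n
      · show Claim₁ (p * X 0) ∧ Claim₂ (p * X 0)
        constructor
        · exact ⟨P1 * X 0, Q1 * X 0, X 0 * c0, X 0 * c1,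
            by rw [map_mul, ι_X0]; linear_combination (X 0 : A) * e1,
            by rw [map_mul, ι_X0]; linear_combination (X 0 : A) * e2⟩
        · exact ⟨P2 * X 0, Q2 * X 0, X 0 * d0, X 0 * d1,
            by rw [map_mul, ι_X0]; linear_combination (X 0 : A) * f1,
            by rw [map_mul, ι_X0]; linear_combination (X 0 : A) * f2⟩
      · show Claim₁ (p * X 1) ∧ Claim₂ (p * X 1)
        constructor
        · exact ⟨P1 * X 1, Q1 * X 1, X 1 * c0, X 1 * c1,
            by rw [map_mul, ι_X1]; linear_combination (X 1 : A) * e1,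
            by rw [map_mul, ι_X1]; linear_combination (X 1 : A) * e2⟩
        · exact ⟨P2 * X 1, Q2 * X 1, X 1 * d0, X 1 * d1,
            by rw [map_mul, ι_X1]; linear_combination (X 1 : A) * f1,
            by rw [map_mul, ι_X1]; linear_combination (X 1 : A) * f2⟩
      · show Claim₁ (p * X 2) ∧ Claim₂ (p * X 2)
        constructor
        · -- p * X 2 in the first slot, use Claim₂ for p
          exact ⟨P2 * X 0, Q2 * X 0, X 0 * d0 - p, X 0 * d1,
            by rw [map_mul, ι_X0]; linear_combination (X 0 : A) * f1,
            by rw [map_mul, ι_X0]; linear_combination (X 0 : A) * f2⟩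
        · -- p * X 2 in the second slot, use Claim₁ for p
          exact ⟨P1 * X 0 * X 1, Q1 * X 0 * X 1, X 0 * X 1 * c0, X 0 * X 1 * c1 - p,
            by rw [map_mul, map_mul, ι_X0, ι_X1];
               linear_combination (X 0 * X 1 : A) * e1,
            by rw [map_mul, map_mul, ι_X0, ι_X1];
               linear_combination (X 0 * X 1 : A) * e2⟩

end CrossCapAux


open CrossCapAux in
/-- The sequence `A² → A² → B → 0` for the cross-cap is exact: the map
`(a₁,a₂) ↦ φ(a₁)·1 + φ(a₂)·y` is surjective onto `B = ℂ[x,y]`, and its kernel is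
exactly the set of `A`-linear combinations of the rows of `Λ`. -/
theorem crossCap_presentation :
    (∀ b : MvPolynomial (Fin 2) ℂ, ∃ a : Fin 2 → MvPolynomial (Fin 3) ℂ,
      crossCap (a 0) * 1 + crossCap (a 1) * X 1 = b) ∧
    {a : Fin 2 → MvPolynomial (Fin 3) ℂ | crossCap (a 0) * 1 + crossCap (a 1) * X 1 = 0} =
      {a : Fin 2 → MvPolynomial (Fin 3) ℂ |
        ∃ c : Fin 2 → MvPolynomial (Fin 3) ℂ, a = Matrix.vecMul c crossCapMatrix} := by
  constructor
  · intro b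
    induction b using MvPolynomial.induction_on with
    | C a => exact ⟨![C a, 0], by simp [crossCap]⟩
    | add p q hp hq =>
        obtain ⟨a, ha⟩ := hp
        obtain ⟨a', ha'⟩ := hq
        exact ⟨![a 0 + a' 0, a 1 + a' 1], by
          simp only [Matrix.cons_val_zero, Matrix.cons_val_one, Matrix.head_cons, map_add]
          linear_combination ha + ha'⟩
    | mul_X p n hp =>
        obtain ⟨a, ha⟩ := hp
        fin_cases n
        · show ∃ a : Fin 2 → MvPolynomial (Fin 3) ℂ,
            crossCap (a 0) * 1 + crossCap (a 1) * X 1 = p * X 0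
          exact ⟨![X 0 * a 0, X 0 * a 1], by
            simp only [Matrix.cons_val_zero, Matrix.cons_val_one, Matrix.head_cons,
              map_mul, crossCap_X0]
            linear_combination (X 0 : B) * ha⟩
        · show ∃ a : Fin 2 → MvPolynomial (Fin 3) ℂ,
            crossCap (a 0) * 1 + crossCap (a 1) * X 1 = p * X 1
          exact ⟨![X 1 * a 1, a 0], by
            simp only [Matrix.cons_val_zero, Matrix.cons_val_one, Matrix.head_cons,
              map_mul, crossCap_X1]
            linear_combination (X 1 : B) * ha⟩
  · ext a
    simp only [Set.mem_setOf_eq]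
    constructor
    · intro h
      obtain ⟨P1, Q1, c0, c1, e1, e2⟩ := (reduce (a 0)).1
      obtain ⟨P2, Q2, d0, d1, f1, f2⟩ := (reduce (a 1)).2
      have ha0 : a 0 = ι (P1 + P2) + ((c0 + d0) * (-(X 2)) + (c1 + d1) * (X 0 * X 1)) := by
        rw [map_add]; linear_combination e1 + f1
      have ha1 : a 1 = ι (Q1 + Q2) + ((c0 + d0) * X 0 + (c1 + d1) * (-(X 2))) := by
        rw [map_add]; linear_combination e2 + f2
      have hPQ : θ (P1 + P2) + θ (Q1 + Q2) * X 1 = 0 := by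
        rw [ha0, ha1, map_add crossCap (ι (P1 + P2)),
          map_add crossCap (ι (Q1 + Q2)), crossCap_rename, crossCap_rename] at h
        linear_combination h - rel_zero (c0 + d0) (c1 + d1)
      obtain ⟨hP, hQ⟩ := even_odd_zero _ _ hPQ
      rw [hP, map_zero, zero_add] at ha0
      rw [hQ, map_zero, zero_add] at ha1
      refine ⟨![c0 + d0, c1 + d1], ?_⟩
      rw [vecMul_eq]
      funext i
      fin_cases i
      · exact ha0
      · exact ha1
    · rintro ⟨c, rfl⟩
      rw [vecMul_eq]
      simp only [Matrix.cons_val_zero, Matrix.cons_val_one, Matrix.head_cons]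
      exact rel_zero (c 0) (c 1)
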